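/- Covariance bound implies local indistinguishability step: if ρ is a state, η an operator with ‖η†η‖ ≤ c, tr(ρ η†η) = 1, and Cov_ρ(g, η†η) ≤ ε·‖g‖·c for all observables g supported on subsystem A, then ‖tr_{A^c}(ρ) − tr_{A^c}(η ρ η†)‖₁ ≤ c·ε. -/

import Mathlib

open scoped ComplexOrder Matrix Kronecker Matrix.Norms.L2Operator

/-- The square root of a positive semidefinite matrix (as in the older Mathlib, where
`Matrix.PosSemidef.sqrt` was defined; removed since). -/
noncomputable def Matrix.PosSemidef.sqrt {n 𝕜 : Type*} [Fintype n] [RCLike 𝕜] [DecidableEq n]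
    {A : Matrix n n 𝕜} (hA : A.PosSemidef) : Matrix n n 𝕜 :=
  (hA.1.eigenvectorUnitary : Matrix n n 𝕜) *
    Matrix.diagonal ((↑) ∘ (fun x : ℝ => √x) ∘ hA.1.eigenvalues) *
    (star (hA.1.eigenvectorUnitary : Matrix n n 𝕜))

/-- The trace norm `‖A‖₁ = tr √(Aᴴ A)` of a complex matrix. -/
noncomputable def traceNorm {n : Type*} [Fintype n] [DecidableEq n]
    (A : Matrix n n ℂ) : ℝ :=
  ((Matrix.posSemidef_conjTranspose_mul_self A).sqrt.trace).re

/-- Partial trace over the second factor `A^c`, the reduction onto `A`. -/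
noncomputable def redA {a e : Type*} [Fintype e]
    (X : Matrix (a × e) (a × e) ℂ) : Matrix a a ℂ :=
  Matrix.of fun i j => ∑ k, X (i, k) (j, k)

open Matrix
open scoped MatrixOrder

lemma redA_conjTranspose {a e : Type*} [Fintype e] (X : Matrix (a × e) (a × e) ℂ) :
    (redA X)ᴴ = redA Xᴴ := by
  ext i j
  simp [redA, Matrix.conjTranspose_apply]

lemma trace_redA_mul {a e : Type*} [Fintype a] [Fintype e] [DecidableEq e]
    (X : Matrix (a × e) (a × e) ℂ) (g : Matrix a a ℂ) :
    (redA X * g).trace = (X * (g ⊗ₖ (1 : Matrix e e ℂ))).trace := by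
  simp only [Matrix.trace, Matrix.diag, Matrix.mul_apply, redA, Matrix.of_apply,
    Fintype.sum_prod_type, Matrix.kroneckerMap_apply, Matrix.one_apply]
  simp only [mul_ite, mul_one, mul_zero, Finset.sum_ite_eq', Finset.mem_univ, if_true,
    Finset.sum_mul]
  exact Finset.sum_congr rfl fun x _ => Finset.sum_comm

/-- For a Hermitian matrix `D` there is a "sign" observable `g` with `‖g‖ ≤ 1`
realizing the trace norm: `tr (D g) = ‖D‖₁`. -/
lemma exists_sign_observable {n : Type*} [Fintype n] [DecidableEq n]
    (D : Matrix n n ℂ) (hD : D.IsHermitian) :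
    ∃ g : Matrix n n ℂ, g.IsHermitian ∧ ‖g‖ ≤ 1 ∧
      (D * g).trace = ((traceNorm D : ℝ) : ℂ) := by
  rcases isEmpty_or_nonempty n with h | h
  · refine ⟨0, ?_, by simp, ?_⟩
    · show (0 : Matrix n n ℂ)ᴴ = 0; simp
    · simp [traceNorm, Matrix.trace, Finset.univ_eq_empty]
  set U : Matrix n n ℂ := (hD.eigenvectorUnitary : Matrix n n ℂ) with hU
  set lam := hD.eigenvalues with hlam
  have hUU : Uᴴ * U = 1 := by
    simpa [Matrix.star_eq_conjTranspose] using
      (Matrix.mem_unitaryGroup_iff'.mp hD.eigenvectorUnitary.2)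
  have hUU' : U * Uᴴ = 1 := by
    simpa [Matrix.star_eq_conjTranspose] using
      (Matrix.mem_unitaryGroup_iff.mp hD.eigenvectorUnitary.2)
  set s : n → ℝ := fun i => if lam i < 0 then -1 else 1 with hs
  have hs2 : ∀ i, s i * s i = 1 := by
    intro i; by_cases h : lam i < 0 <;> simp [hs, h]
  have hslam : ∀ i, lam i * s i = |lam i| := by
    intro i; by_cases h : lam i < 0
    · simp [hs, h, abs_of_neg h]
    · simp [hs, h, abs_of_nonneg (le_of_not_gt h)]
  set d : Matrix n n ℂ := Matrix.diagonal fun i => (s i : ℂ) with hd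
  have hdH : dᴴ = d := by
    rw [hd, Matrix.diagonal_conjTranspose]
    refine congrArg _ (funext fun i => ?_)
    exact Complex.conj_ofReal _
  set g : Matrix n n ℂ := U * d * Uᴴ with hg
  have hgH : g.IsHermitian := by
    show gᴴ = g
    rw [hg, Matrix.conjTranspose_mul, Matrix.conjTranspose_mul, hdH,
      Matrix.conjTranspose_conjTranspose, Matrix.mul_assoc]
  have hdd : d * d = 1 := by
    rw [hd, Matrix.diagonal_mul_diagonal]
    convert Matrix.diagonal_one using 2
    funext i
    rw [← Complex.ofReal_mul, hs2 i, Complex.ofReal_one]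
  have hgg : gᴴ * g = 1 := by
    rw [hgH.eq, hg]
    calc U * d * Uᴴ * (U * d * Uᴴ) = U * (d * (Uᴴ * U) * d) * Uᴴ := by
          simp only [Matrix.mul_assoc]
      _ = 1 := by rw [hUU, Matrix.mul_one, hdd, Matrix.mul_one, hUU']
  have hgnorm : ‖g‖ ≤ 1 := by
    have h1 := Matrix.l2_opNorm_conjTranspose_mul_self g
    rw [hgg, CStarRing.norm_one] at h1
    nlinarith [norm_nonneg g, h1.symm]
  -- spectral decomposition
  have hspec : D = U * Matrix.diagonal (fun i => (lam i : ℂ)) * Uᴴ := by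
    have := hD.spectral_theorem
    rw [Unitary.conjStarAlgAut_apply, Matrix.star_eq_conjTranspose] at this
    exact this
  -- trace of D * g
  have hDg : D * g = U * Matrix.diagonal (fun i => ((|lam i| : ℝ) : ℂ)) * Uᴴ := by
    rw [hspec, hg]
    calc U * Matrix.diagonal (fun i => (lam i : ℂ)) * Uᴴ * (U * d * Uᴴ)
        = U * (Matrix.diagonal (fun i => (lam i : ℂ)) * (Uᴴ * U) * d) * Uᴴ := by
          simp only [Matrix.mul_assoc]
      _ = U * (Matrix.diagonal (fun i => (lam i : ℂ)) * d) * Uᴴ := by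
          rw [hUU, Matrix.mul_one]
      _ = U * Matrix.diagonal (fun i => ((|lam i| : ℝ) : ℂ)) * Uᴴ := by
          rw [hd, Matrix.diagonal_mul_diagonal]
          refine congrArg₂ _ (congrArg _ (congrArg _ (funext fun i => ?_))) rfl
          rw [← Complex.ofReal_mul, hslam i]
  have htraceU : ∀ v : n → ℂ, (U * Matrix.diagonal v * Uᴴ).trace = ∑ i, v i := by
    intro v
    rw [Matrix.trace_mul_cycle, hUU, Matrix.one_mul, Matrix.trace_diagonal]
  -- the square root of Dᴴ * D
  have habs_nonneg : ∀ i, 0 ≤ ((|lam i| : ℝ) : ℂ) := fun i => by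
    rw [Complex.zero_le_real]; exact abs_nonneg _
  have hP : (U * Matrix.diagonal (fun i => ((|lam i| : ℝ) : ℂ)) * Uᴴ).PosSemidef :=
    (Matrix.posSemidef_diagonal_iff.mpr habs_nonneg).mul_mul_conjTranspose_same U
  have hPsq : (U * Matrix.diagonal (fun i => ((|lam i| : ℝ) : ℂ)) * Uᴴ) ^ 2 = Dᴴ * D := by
    rw [hD.eq, pow_two, hspec]
    calc U * Matrix.diagonal (fun i => ((|lam i| : ℝ) : ℂ)) * Uᴴ
          * (U * Matrix.diagonal (fun i => ((|lam i| : ℝ) : ℂ)) * Uᴴ)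
        = U * (Matrix.diagonal (fun i => ((|lam i| : ℝ) : ℂ)) * (Uᴴ * U)
            * Matrix.diagonal (fun i => ((|lam i| : ℝ) : ℂ))) * Uᴴ := by
          simp only [Matrix.mul_assoc]
      _ = U * (Matrix.diagonal (fun i => (lam i : ℂ)) * (Uᴴ * U)
            * Matrix.diagonal (fun i => (lam i : ℂ))) * Uᴴ := by
          rw [hUU]
          simp only [Matrix.mul_one, Matrix.diagonal_mul_diagonal]
          refine congrArg₂ _ (congrArg _ (congrArg _ (funext fun i => ?_))) rfl
          rw [← Complex.ofReal_mul, ← Complex.ofReal_mul, abs_mul_abs_self]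
      _ = U * Matrix.diagonal (fun i => (lam i : ℂ)) * Uᴴ
            * (U * Matrix.diagonal (fun i => (lam i : ℂ)) * Uᴴ) := by
          simp only [Matrix.mul_assoc, hUU, Matrix.one_mul]
          rw [← Matrix.mul_assoc Uᴴ U, hUU, Matrix.one_mul]
  have hsqrt : U * Matrix.diagonal (fun i => ((|lam i| : ℝ) : ℂ)) * Uᴴ
      = (Matrix.posSemidef_conjTranspose_mul_self D).sqrt := by
    have h1 : (Matrix.posSemidef_conjTranspose_mul_self D).sqrt = CFC.sqrt (Dᴴ * D) := by
      rw [CFC.sqrt_eq_real_sqrt _ (Matrix.posSemidef_conjTranspose_mul_self D).nonneg,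
        cfcₙ_eq_cfc (hf0 := Real.sqrt_zero), (Matrix.posSemidef_conjTranspose_mul_self D).1.cfc_eq]
      rfl
    rw [h1]
    exact (CFC.sqrt_unique (by rw [← pow_two]; exact hPsq) hP.nonneg).symm
  have htn : traceNorm D = ∑ i, |lam i| := by
    rw [traceNorm, ← hsqrt, htraceU]
    simp
  refine ⟨g, hgH, hgnorm, ?_⟩
  rw [hDg, htraceU, htn]
  push_cast
  ring

/-- Covariance bound implies a local indistinguishability step: if
`η = 1 ⊗ η'` is supported on `A^c` with `‖ηᴴη‖ ≤ c`, `tr(ρ ηᴴη) = 1`, and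
`Cov_ρ(g, ηᴴη) ≤ ε‖g‖c` for every observable `g = g_A ⊗ 1` supported on `A`,
then `‖tr_{A^c}(ρ) − tr_{A^c}(η ρ ηᴴ)‖₁ ≤ c ε`. -/
theorem local_indistinguishability_step {a e : Type*}
    [Fintype a] [DecidableEq a] [Fintype e] [DecidableEq e]
    (ρ : Matrix (a × e) (a × e) ℂ) (hρ : ρ.PosSemidef) (hρtr : ρ.trace = 1)
    (η' : Matrix e e ℂ) (c ε : ℝ) (hc : 0 ≤ c) (hε : 0 ≤ ε)
    (hnorm : ‖η'ᴴ * η'‖ ≤ c)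
    (htr : (ρ * ((1 : Matrix a a ℂ) ⊗ₖ (η'ᴴ * η'))).trace = 1)
    (hcov : ∀ gA : Matrix a a ℂ, gA.IsHermitian →
      ‖((ρ * (gA ⊗ₖ (1 : Matrix e e ℂ))
            * ((1 : Matrix a a ℂ) ⊗ₖ (η'ᴴ * η'))).trace
          - (ρ * (gA ⊗ₖ (1 : Matrix e e ℂ))).trace
            * (ρ * ((1 : Matrix a a ℂ) ⊗ₖ (η'ᴴ * η'))).trace)‖
        ≤ ε * ‖gA‖ * c) :
    traceNorm (redA ρ
        - redA (((1 : Matrix a a ℂ) ⊗ₖ η') * ρ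
            * ((1 : Matrix a a ℂ) ⊗ₖ η')ᴴ)) ≤ c * ε := by
  classical
  set k : Matrix e e ℂ := η'ᴴ * η' with hk
  set N : Matrix (a × e) (a × e) ℂ := (1 : Matrix a a ℂ) ⊗ₖ η' with hN
  have hNH : Nᴴ = (1 : Matrix a a ℂ) ⊗ₖ η'ᴴ := by
    ext ⟨i, p⟩ ⟨j, q⟩
    by_cases h : i = j
    · subst h
      simp [hN, Matrix.conjTranspose_apply, Matrix.kroneckerMap_apply, Matrix.one_apply]
    · simp [hN, Matrix.conjTranspose_apply, Matrix.kroneckerMap_apply, Matrix.one_apply,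
        h, Ne.symm h]
  have hσH : (N * ρ * Nᴴ).IsHermitian := by
    show (N * ρ * Nᴴ)ᴴ = _
    simp [Matrix.conjTranspose_mul, hρ.1.eq, Matrix.mul_assoc]
  have hD : (redA ρ - redA (N * ρ * Nᴴ)).IsHermitian := by
    show _ᴴ = _
    rw [Matrix.conjTranspose_sub, redA_conjTranspose, redA_conjTranspose, hρ.1.eq, hσH.eq]
  obtain ⟨g, hgH, hgle, hgtr⟩ := exists_sign_observable _ hD
  -- compute the traces
  have hmulk : (g ⊗ₖ (1 : Matrix e e ℂ)) * ((1 : Matrix a a ℂ) ⊗ₖ k) = g ⊗ₖ k := by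
    rw [← Matrix.mul_kronecker_mul, mul_one, one_mul]
  have h2 : ((1 : Matrix a a ℂ) ⊗ₖ η'ᴴ)
        * ((g ⊗ₖ (1 : Matrix e e ℂ)) * ((1 : Matrix a a ℂ) ⊗ₖ η')) = g ⊗ₖ k := by
    rw [← Matrix.mul_kronecker_mul, ← Matrix.mul_kronecker_mul]
    simp [hk]
  have hcycle : (N * ρ * Nᴴ * (g ⊗ₖ (1 : Matrix e e ℂ))).trace
      = (ρ * (g ⊗ₖ (1 : Matrix e e ℂ)) * ((1 : Matrix a a ℂ) ⊗ₖ k)).trace := by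
    calc (N * ρ * Nᴴ * (g ⊗ₖ (1 : Matrix e e ℂ))).trace
        = (N * (ρ * (Nᴴ * (g ⊗ₖ (1 : Matrix e e ℂ))))).trace := by
          rw [Matrix.mul_assoc, Matrix.mul_assoc]
      _ = ((ρ * (Nᴴ * (g ⊗ₖ (1 : Matrix e e ℂ)))) * N).trace := Matrix.trace_mul_comm _ _
      _ = (ρ * (Nᴴ * ((g ⊗ₖ (1 : Matrix e e ℂ)) * N))).trace := by
          rw [Matrix.mul_assoc, Matrix.mul_assoc]
      _ = (ρ * (g ⊗ₖ k)).trace := by rw [hNH]; rw [hN, h2]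
      _ = (ρ * ((g ⊗ₖ (1 : Matrix e e ℂ)) * ((1 : Matrix a a ℂ) ⊗ₖ k))).trace := by
          rw [hmulk]
      _ = (ρ * (g ⊗ₖ (1 : Matrix e e ℂ)) * ((1 : Matrix a a ℂ) ⊗ₖ k)).trace := by
          rw [Matrix.mul_assoc]
  have hkey : ((redA ρ - redA (N * ρ * Nᴴ)) * g).trace
      = (ρ * (g ⊗ₖ (1 : Matrix e e ℂ))).trace
        - (ρ * (g ⊗ₖ (1 : Matrix e e ℂ)) * ((1 : Matrix a a ℂ) ⊗ₖ k)).trace := by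
    rw [Matrix.sub_mul, Matrix.trace_sub, trace_redA_mul, trace_redA_mul, hcycle]
  -- bound
  have habs : ‖(((redA ρ - redA (N * ρ * Nᴴ)) * g).trace)‖ ≤ ε * ‖g‖ * c := by
    rw [hkey]
    have := hcov g hgH
    rw [htr, mul_one] at this
    calc ‖((ρ * (g ⊗ₖ (1 : Matrix e e ℂ))).trace
          - (ρ * (g ⊗ₖ (1 : Matrix e e ℂ)) * ((1 : Matrix a a ℂ) ⊗ₖ k)).trace)‖
        = ‖((ρ * (g ⊗ₖ (1 : Matrix e e ℂ)) * ((1 : Matrix a a ℂ) ⊗ₖ k)).trace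
            - (ρ * (g ⊗ₖ (1 : Matrix e e ℂ))).trace)‖ := by
          rw [norm_sub_rev]
      _ ≤ ε * ‖g‖ * c := this
  have hle1 : traceNorm (redA ρ - redA (N * ρ * Nᴴ))
      ≤ ‖(((redA ρ - redA (N * ρ * Nᴴ)) * g).trace)‖ := by
    rw [hgtr]
    simpa using Complex.re_le_norm ((traceNorm (redA ρ - redA (N * ρ * Nᴴ)) : ℂ))
  refine hle1.trans (habs.trans ?_)
  calc ε * ‖g‖ * c ≤ ε * 1 * c := by
        gcongr
    _ = c * ε := by ring
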